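/- Let E(0,s) = (4s/(s²-16))·[[s+4, 4],[(s+4)(s-2), 3s-4]]. Define M(s₁,s₂) := E(0,s₁) + E(s₁,s₂) + E(s₁,s₂)·E(0,s₁) - E(0,s₁+s₂), for s₁, s₂ small (so all denominators are nonzero). Then M(s₁,s₂) = (4 s₁s₂(s₁+s₂) / ((s₁²-16)((s₁+s₂)²-16)((2s₁+s₂)²-16))) · N(s₁,s₂), where N has entries N₁₁ = (s₁+4)(s₁+s₂+4)(6s₁+5s₂-12), N₁₂ = 4(5s₂²+13s₁s₂+9s₁²-48), N₂₁ = 2(s₁+4)(s₁+s₂+4)(4-6s₁+2s₁²-7s₂+4s₁s₂+2s₂²), N₂₂ = 192-128s₁-36s₁²+26s₁³-160s₂-52s₁s₂+65s₁²s₂-20s₂²+55s₁s₂²+16s₂³. -/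

import Mathlib

noncomputable def Emat (v s : ℝ) : Matrix (Fin 2) (Fin 2) ℝ :=
  (4 * s / ((2 * v + s) ^ 2 - 16)) •
    !![s + 4 - 2 * v, 4; (s + 4) * (s - 2) + 4 * v, 3 * s - 4 + 2 * v]

theorem Emat_zero_left (s : ℝ) :
    Emat 0 s = (4 * s / (s ^ 2 - 16)) • !![s + 4, 4; (s + 4) * (s - 2), 3 * s - 4] := by
  simp [Emat]

theorem sq_sub_sixteen_ne_zero {x : ℝ} (hl : -4 < x) (hu : x < 4) : x ^ 2 - 16 ≠ 0 := by
  nlinarith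

theorem Emat_interaction {s₁ s₂ : ℝ} (h₁ : s₁ ^ 2 - 16 ≠ 0) (h₁₂ : (s₁ + s₂) ^ 2 - 16 ≠ 0)
    (h₂₁ : (2 * s₁ + s₂) ^ 2 - 16 ≠ 0) :
    Emat 0 s₁ + Emat s₁ s₂ + Emat s₁ s₂ * Emat 0 s₁ - Emat 0 (s₁ + s₂) =
      (4 * s₁ * s₂ * (s₁ + s₂) /
          ((s₁ ^ 2 - 16) * ((s₁ + s₂) ^ 2 - 16) * ((2 * s₁ + s₂) ^ 2 - 16))) •
        !![(s₁ + 4) * (s₁ + s₂ + 4) * (6 * s₁ + 5 * s₂ - 12),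
           4 * (5 * s₂ ^ 2 + 13 * s₁ * s₂ + 9 * s₁ ^ 2 - 48);
           2 * (s₁ + 4) * (s₁ + s₂ + 4) *
             (4 - 6 * s₁ + 2 * s₁ ^ 2 - 7 * s₂ + 4 * s₁ * s₂ + 2 * s₂ ^ 2),
           192 - 128 * s₁ - 36 * s₁ ^ 2 + 26 * s₁ ^ 3 - 160 * s₂ - 52 * s₁ * s₂ +
             65 * s₁ ^ 2 * s₂ - 20 * s₂ ^ 2 + 55 * s₁ * s₂ ^ 2 + 16 * s₂ ^ 3] := by
  -- `field_simp` normalises `2 * s₁` to `s₁ * 2` before looking for the nonvanishing hypothesis.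
  have h₂₁' : (s₁ * 2 + s₂) ^ 2 - 16 ≠ 0 := by rwa [mul_comm]
  rw [Emat_zero_left, Emat_zero_left, Emat, Matrix.smul_mul, Matrix.mul_smul, smul_smul,
    Matrix.mul_fin_two]
  ext i j
  fin_cases i <;> fin_cases j <;>
    simp only [Matrix.smul_of, Matrix.smul_cons, smul_eq_mul, Matrix.smul_empty, Matrix.of_add_of,
      Matrix.add_cons, Matrix.head_cons, Matrix.tail_cons, Matrix.empty_add_empty, Matrix.sub_apply,
      Matrix.smul_apply, Matrix.of_apply, Matrix.cons_val', Matrix.cons_val_zero, Matrix.cons_val_one,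
      Matrix.cons_val_fin_one, Fin.zero_eta, Fin.mk_one, Fin.isValue] <;>
    field_simp <;> ring

theorem stmt10 (s₁ s₂ : ℝ) (h₁ : |s₁| < 1) (h₂ : |s₂| < 1) :
    Emat 0 s₁ + Emat s₁ s₂ + Emat s₁ s₂ * Emat 0 s₁ - Emat 0 (s₁ + s₂) =
      (4 * s₁ * s₂ * (s₁ + s₂) /
          ((s₁ ^ 2 - 16) * ((s₁ + s₂) ^ 2 - 16) * ((2 * s₁ + s₂) ^ 2 - 16))) •
        !![(s₁ + 4) * (s₁ + s₂ + 4) * (6 * s₁ + 5 * s₂ - 12),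
           4 * (5 * s₂ ^ 2 + 13 * s₁ * s₂ + 9 * s₁ ^ 2 - 48);
           2 * (s₁ + 4) * (s₁ + s₂ + 4) *
             (4 - 6 * s₁ + 2 * s₁ ^ 2 - 7 * s₂ + 4 * s₁ * s₂ + 2 * s₂ ^ 2),
           192 - 128 * s₁ - 36 * s₁ ^ 2 + 26 * s₁ ^ 3 - 160 * s₂ - 52 * s₁ * s₂ +
             65 * s₁ ^ 2 * s₂ - 20 * s₂ ^ 2 + 55 * s₁ * s₂ ^ 2 + 16 * s₂ ^ 3] := by
  rw [abs_lt] at h₁ h₂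
  exact Emat_interaction (sq_sub_sixteen_ne_zero (by linarith) (by linarith))
    (sq_sub_sixteen_ne_zero (by linarith) (by linarith))
    (sq_sub_sixteen_ne_zero (by linarith) (by linarith))
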